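/- Let $Y$ be a connected graph in which every vertex has degree exactly $d \ge 2$, and suppose every finite nonempty set $A$ of vertices satisfies $|\partial A| \ge (d-2)|A|$, where $\partial A$ is the set of edges with exactly one endpoint in $A$. Then the ball $B_n$ of radius $n$ around any fixed vertex satisfies $|B_n| \ge d(d-1)^{n-1}$ for all $n \ge 1$. -/
import Mathlib

open SimpleGraph Set

/-- The edge boundary of a vertex set `A`: edges of `G` with exactly one endpoint in `A`. -/
def edgeBdry {V : Type*} (G : SimpleGraph V) (A : Set V) : Set (Sym2 V) :=
  {e | e ∈ G.edgeSet ∧ ∃ x y, e = s(x, y) ∧ x ∈ A ∧ y ∉ A}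

private lemma dist_getVert_le' {V : Type*} {G : SimpleGraph V} (hconn : G.Connected)
    {a w : V} (p : G.Walk a w) : ∀ i, G.dist a (p.getVert i) ≤ i := by
  induction p with
  | nil =>
    intro i
    rw [SimpleGraph.Walk.getVert_of_length_le _ (by simp), SimpleGraph.dist_self]
    exact Nat.zero_le i
  | @cons a b w h q ih =>
    intro i
    cases i with
    | zero => simp
    | succ i =>
      have h1 : (SimpleGraph.Walk.cons h q).getVert (i + 1) = q.getVert i := rfl
      rw [h1]
      calc G.dist a (q.getVert i) ≤ G.dist a b + G.dist b (q.getVert i) := hconn.dist_triangle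
        _ ≤ 1 + i := by
            have := G.dist_le h.toWalk
            simp only [SimpleGraph.Walk.length_cons, SimpleGraph.Walk.length_nil] at this
            exact Nat.add_le_add (by simpa using this) (ih i)
        _ = i + 1 := by omega

private lemma exists_adj_of_dist_succ' {V : Type*} {G : SimpleGraph V} (hconn : G.Connected)
    {v w : V} {n : ℕ} (h : G.dist v w = n + 1) : ∃ u, G.dist v u ≤ n ∧ G.Adj u w := by
  obtain ⟨p, hp⟩ := hconn.exists_walk_length_eq_dist v w
  have hlen : p.length = n + 1 := by rw [hp, h]
  refine ⟨p.getVert n, dist_getVert_le' hconn p n, ?_⟩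
  have := p.adj_getVert_succ (by omega : n < p.length)
  rwa [show n + 1 = p.length by omega, p.getVert_length] at this

private lemma ball_finite' {V : Type*} {G : SimpleGraph V} [G.LocallyFinite]
    (hconn : G.Connected) (v : V) : ∀ n : ℕ, {u | G.dist v u ≤ n}.Finite := by
  intro n
  induction n with
  | zero =>
    apply Set.Finite.subset (Set.finite_singleton v)
    intro u hu
    simp only [Set.mem_setOf_eq, Nat.le_zero] at hu
    simp [(hconn.dist_eq_zero_iff.mp hu).symm]
  | succ n ih =>
    apply Set.Finite.subset (ih.union (ih.biUnion (fun u _ => (G.neighborSet u).toFinite)))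
    intro w hw
    simp only [Set.mem_setOf_eq] at hw
    rcases Nat.lt_or_ge (G.dist v w) (n + 1) with h | h
    · exact Or.inl (by simpa using Nat.lt_succ_iff.mp h)
    · have hd : G.dist v w = n + 1 := le_antisymm hw h
      obtain ⟨u, hu, hadj⟩ := exists_adj_of_dist_succ' hconn hd
      exact Or.inr (Set.mem_biUnion hu hadj)

private lemma growth_key {V : Type*} (G : SimpleGraph V) [G.LocallyFinite] (d : ℕ) (hd : 2 ≤ d)
    (hconn : G.Connected) (hreg : ∀ v, G.degree v = d)
    (hiso : ∀ A : Set V, A.Finite → A.Nonempty → (d - 2) * A.ncard ≤ (edgeBdry G A).ncard)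
    (v : V) (n : ℕ) :
    (d - 1) * {u | G.dist v u ≤ n}.ncard ≤ {u | G.dist v u ≤ n + 1}.ncard := by
  classical
  set A : Set V := {u | G.dist v u ≤ n} with hA
  set B : Set V := {u | G.dist v u ≤ n + 1} with hBdef
  have hAfin := ball_finite' hconn v n
  have hBfin := ball_finite' hconn v (n + 1)
  have hsub : A ⊆ B := by
    intro u hu
    simp only [hA, Set.mem_setOf_eq] at hu
    simp only [hBdef, Set.mem_setOf_eq]
    omega
  set S : Set V := B \ A with hSdef
  have hSfin : S.Finite := hBfin.subset Set.diff_subset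
  have hSmem : ∀ u ∈ S, G.dist v u = n + 1 := by
    rintro u ⟨h1, h2⟩
    simp only [hA, Set.mem_setOf_eq] at h2
    simp only [hBdef, Set.mem_setOf_eq] at h1
    omega
  have hpred : ∀ u ∈ S, ∃ z, G.dist v z ≤ n ∧ G.Adj z u := fun u hu =>
    exists_adj_of_dist_succ' hconn (hSmem u hu)
  choose! pred hpred1 hpred2 using hpred
  set F : V → Finset (Sym2 V) := fun u => (G.incidenceFinset u).erase s(u, pred u) with hF
  have hFcard : ∀ u ∈ S, (F u).card ≤ d - 1 := by
    intro u hu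
    have hm : s(u, pred u) ∈ G.incidenceFinset u := by
      rw [SimpleGraph.mem_incidenceFinset]
      exact ⟨(hpred2 u hu).symm, Sym2.mem_mk_left u _⟩
    have := Finset.card_erase_of_mem hm
    rw [SimpleGraph.card_incidenceFinset_eq_degree, hreg] at this
    have h0 : (F u).card = ((G.incidenceFinset u).erase s(u, pred u)).card := rfl
    omega
  have hbd : edgeBdry G B ⊆ ↑(hSfin.toFinset.biUnion F) := by
    rintro e ⟨he, x, y, rfl, hx, hy⟩
    have hadj : G.Adj x y := he
    have hxS : x ∈ S := by
      refine ⟨hx, fun hxA => hy ?_⟩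
      simp only [hA, Set.mem_setOf_eq] at hxA
      have h1 : G.dist v y ≤ G.dist v x + G.dist x y := hconn.dist_triangle
      have h2 : G.dist x y = 1 := SimpleGraph.dist_eq_one_iff_adj.mpr hadj
      simp only [hBdef, Set.mem_setOf_eq]
      omega
    simp only [Finset.coe_biUnion, Set.mem_iUnion]
    refine ⟨x, hSfin.mem_toFinset.mpr hxS, ?_⟩
    simp only [hF, Finset.coe_erase, Set.mem_diff, Set.mem_singleton_iff]
    constructor
    · rw [Finset.mem_coe, SimpleGraph.mem_incidenceFinset]
      exact ⟨hadj, Sym2.mem_mk_left x y⟩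
    · intro heq
      rw [Sym2.eq_iff] at heq
      rcases heq with ⟨-, hy'⟩ | ⟨hx', hy'⟩
      · apply hy
        rw [hy']
        exact hsub (hpred1 x hxS)
      · exact hy (hy' ▸ hx)
  have h1 : (edgeBdry G B).ncard ≤ (d - 1) * S.ncard := by
    calc (edgeBdry G B).ncard ≤ (↑(hSfin.toFinset.biUnion F) : Set (Sym2 V)).ncard :=
          Set.ncard_le_ncard hbd (Set.toFinite _)
      _ = (hSfin.toFinset.biUnion F).card := Set.ncard_coe_finset _
      _ ≤ ∑ u ∈ hSfin.toFinset, (F u).card := Finset.card_biUnion_le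
      _ ≤ ∑ _u ∈ hSfin.toFinset, (d - 1) :=
          Finset.sum_le_sum (fun u hu => hFcard u (hSfin.mem_toFinset.mp hu))
      _ = hSfin.toFinset.card * (d - 1) := by rw [Finset.sum_const, smul_eq_mul]
      _ = (d - 1) * S.ncard := by
          rw [Set.ncard_eq_toFinset_card S hSfin, Nat.mul_comm]
  have h2 := hiso B hBfin ⟨v, by simp only [hBdef, Set.mem_setOf_eq, SimpleGraph.dist_self]; omega⟩
  have hAB : A.ncard ≤ B.ncard := Set.ncard_le_ncard hsub hBfin
  have hdiff : S.ncard = B.ncard - A.ncard := Set.ncard_diff hsub hAfin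
  obtain ⟨e, he⟩ : ∃ e, d = e + 2 := ⟨d - 2, by omega⟩
  subst he
  have hd2 : e + 2 - 2 = e := by omega
  have hd1 : e + 2 - 1 = e + 1 := by omega
  rw [hd2] at h2
  rw [hd1] at h1 ⊢
  obtain ⟨s, hs⟩ : ∃ s, B.ncard = A.ncard + s := ⟨B.ncard - A.ncard, by omega⟩
  have hSn : S.ncard = s := by omega
  have h4 : e * (A.ncard + s) ≤ (e + 1) * s := by
    rw [← hs, ← hSn]; exact le_trans h2 h1
  have h5 : e * A.ncard + e * s ≤ e * s + s := by
    rw [Nat.mul_add, Nat.add_mul, Nat.one_mul] at h4; exact h4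
  rw [Nat.add_comm (e * A.ncard)] at h5
  have hkey : e * A.ncard ≤ s := Nat.le_of_add_le_add_left h5
  rw [hs]
  calc (e + 1) * A.ncard = e * A.ncard + A.ncard := by ring
    _ ≤ s + A.ncard := Nat.add_le_add_right hkey _
    _ = A.ncard + s := Nat.add_comm _ _

theorem stmt0 {V : Type*} (G : SimpleGraph V) [G.LocallyFinite] (d : ℕ) (hd : 2 ≤ d)
    (hconn : G.Connected) (hreg : ∀ v, G.degree v = d)
    (hiso : ∀ A : Set V, A.Finite → A.Nonempty →
      (d - 2) * A.ncard ≤ (edgeBdry G A).ncard)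
    (v : V) :
    ∀ n : ℕ, 1 ≤ n → d * (d - 1) ^ (n - 1) ≤ {u | G.dist v u ≤ n}.ncard := by
  have hgrow := growth_key G d hd hconn hreg hiso v
  have base : d ≤ {u | G.dist v u ≤ 1}.ncard := by
    have hsub : G.neighborSet v ⊆ {u | G.dist v u ≤ 1} := by
      intro u hu
      simp only [Set.mem_setOf_eq]
      exact le_of_eq (SimpleGraph.dist_eq_one_iff_adj.mpr hu)
    calc d = G.degree v := (hreg v).symm
      _ = (G.neighborSet v).ncard := by rw [Set.ncard_eq_toFinset_card']; rfl
      _ ≤ _ := Set.ncard_le_ncard hsub (ball_finite' hconn v 1)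
  intro n hn
  induction n with
  | zero => omega
  | succ n ih =>
    rcases Nat.eq_zero_or_pos n with h0 | h1
    · subst h0; simpa using base
    · have ihn := ih h1
      calc d * (d - 1) ^ (n + 1 - 1) = (d - 1) * (d * (d - 1) ^ (n - 1)) := by
            have hn1 : n + 1 - 1 = (n - 1) + 1 := by omega
            rw [hn1]; ring
        _ ≤ (d - 1) * {u | G.dist v u ≤ n}.ncard := Nat.mul_le_mul_left _ ihn
        _ ≤ _ := hgrow n
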